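/- The map k ↦ (C,D)^k from Fibonacci indexes to words over the alphabet {C, D} is injective: if (C,D)^k = (C,D)^ℓ for Fibonacci indexes k and ℓ, then k = ℓ (uniqueness part of the factorization of a word in C and D at the occurrences of the factor CD). -/
import Mathlib


/-- The two-letter alphabet. -/
inductive Letter : Type
  | C : Letter
  | D : Letter
deriving DecidableEq, Repr

open Letter

/-- The block `D^i C^j` corresponding to a pair `(i, j)`. -/
def block (p : ℕ × ℕ) : List Letter :=
  List.replicate p.1 D ++ List.replicate p.2 C

/-- A Fibonacci index is a nonempty list `k : List (ℕ × ℕ)`; the word `(C,D)^k`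
is `D^{i_0}C^{j_0} ++ [C,D] ++ … ++ [C,D] ++ D^{i_r}C^{j_r}`. -/
def cdWord (k : List (ℕ × ℕ)) : List Letter :=
  List.intercalate [C, D] (k.map block)

/-- The degree `2·Σ i_n + Σ j_n + 3r` of a Fibonacci index of order `r + 1`. -/
def degree (k : List (ℕ × ℕ)) : ℕ :=
  2 * (k.map Prod.fst).sum + (k.map Prod.snd).sum + 3 * (k.length - 1)

lemma cdWord_single (p : ℕ × ℕ) : cdWord [p] = block p := by
  simp [cdWord, List.intercalate]

lemma cdWord_cons (p q : ℕ × ℕ) (t : List (ℕ × ℕ)) :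
    cdWord (p :: q :: t) = block p ++ [C, D] ++ cdWord (q :: t) := by
  simp [cdWord, List.intercalate, List.intersperse]

lemma repl_cancel (x : Letter) (a b : ℕ) (u v : List Letter)
    (hu : u.head? ≠ some x) (hv : v.head? ≠ some x)
    (h : List.replicate a x ++ u = List.replicate b x ++ v) : a = b ∧ u = v := by
  induction a generalizing b with
  | zero =>
    cases b with
    | zero => simpa using h
    | succ b =>
      simp only [List.replicate_zero, List.nil_append, List.replicate_succ,
        List.cons_append] at h
      exact absurd (by rw [h]; rfl) hu
  | succ a ih =>
    cases b with
    | zero =>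
      simp only [List.replicate_zero, List.nil_append, List.replicate_succ,
        List.cons_append] at h
      exact absurd (by rw [← h]; rfl) hv
    | succ b =>
      rw [List.replicate_succ, List.replicate_succ] at h
      simp only [List.cons_append, List.cons.injEq] at h
      obtain ⟨ha, huv⟩ := ih b h.2
      exact ⟨by omega, huv⟩

lemma cdWord_single' (i j : ℕ) :
    cdWord [(i, j)] = List.replicate i D ++ List.replicate j C := by
  rw [cdWord_single]; rfl

lemma cdWord_cons' (i j : ℕ) (q : ℕ × ℕ) (t : List (ℕ × ℕ)) :
    cdWord ((i, j) :: q :: t) =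
      List.replicate i D ++ (List.replicate (j + 1) C ++ (D :: cdWord (q :: t))) := by
  rw [cdWord_cons]
  simp [block, List.replicate_succ', List.append_assoc]

lemma head_replC_nil (j : ℕ) : (List.replicate j C).head? ≠ some D := by
  cases j <;> simp [List.replicate_succ]

lemma head_replC_succ (j : ℕ) (v : List Letter) :
    (List.replicate (j + 1) C ++ v).head? ≠ some D := by
  simp [List.replicate_succ]

/-- Uniqueness part of the factorization: the map `k ↦ (C,D)^k` is injective
on Fibonacci indexes. -/
theorem cdWord_injective (k l : List (ℕ × ℕ)) (hk : k ≠ []) (hl : l ≠ [])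
    (h : cdWord k = cdWord l) : k = l := by
  induction k generalizing l with
  | nil => exact absurd rfl hk
  | cons p t ih =>
    cases l with
    | nil => exact absurd rfl hl
    | cons q s =>
      obtain ⟨i, j⟩ := p
      obtain ⟨i', j'⟩ := q
      cases t with
      | nil =>
        cases s with
        | nil =>
          rw [cdWord_single', cdWord_single'] at h
          obtain ⟨h1, h2⟩ := repl_cancel D i i' _ _
            (head_replC_nil j) (head_replC_nil j') h
          obtain ⟨h3, h4⟩ := repl_cancel C j j' [] [] (by simp) (by simp)
            (by simpa using h2)
          simp [h1, h3]
        | cons q' s' =>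
          rw [cdWord_single', cdWord_cons'] at h
          obtain ⟨h1, h2⟩ := repl_cancel D i i' _ _
            (head_replC_nil j) (head_replC_succ j' _) h
          obtain ⟨h3, h4⟩ := repl_cancel C j (j' + 1) [] (D :: cdWord (q' :: s')) (by simp) (by simp)
            (by simpa using h2)
          exact absurd h4 (by simp)
      | cons p' t' =>
        cases s with
        | nil =>
          rw [cdWord_cons', cdWord_single'] at h
          obtain ⟨h1, h2⟩ := repl_cancel D i i' _ _
            (head_replC_succ j _) (head_replC_nil j') h
          obtain ⟨h3, h4⟩ := repl_cancel C (j + 1) j' (D :: cdWord (p' :: t')) [] (by simp) (by simp)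
            (by simpa using h2)
          exact absurd h4.symm (by simp)
        | cons q' s' =>
          rw [cdWord_cons', cdWord_cons'] at h
          obtain ⟨h1, h2⟩ := repl_cancel D i i' _ _
            (head_replC_succ j _) (head_replC_succ j' _) h
          obtain ⟨h3, h4⟩ := repl_cancel C (j + 1) (j' + 1) _ _ (by simp) (by simp) h2
          simp only [List.cons.injEq] at h4
          have := ih (q' :: s') (by simp) (by simp) h4.2
          simp_all
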